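/- Let G be a group, H a subgroup of G, and H₀ a subgroup of G contained in H such that H₀ is a characteristic subgroup of H (that is, every group automorphism of H maps H₀, viewed as a subgroup of H, onto itself). If the quotient group N_G(H₀)/H₀ is abelian (equivalently, for all a, b in the normalizer N_G(H₀), the commutator a·b·a⁻¹·b⁻¹ lies in H₀), then N_G(H) = N_G(H₀). -/

import Mathlib

/-- If `H₀ ≤ H` are subgroups of `G`, `H₀` is characteristic in `H`, and the quotient
`N_G(H₀)/H₀` is abelian (stated as: commutators of elements of the normalizer of `H₀`
lie in `H₀`), then `N_G(H) = N_G(H₀)`. -/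
theorem normalizer_eq_of_characteristic {G : Type} [Group G]
    (H H₀ : Subgroup G) (hle : H₀ ≤ H)
    (hchar : (H₀.subgroupOf H).Characteristic)
    (hab : ∀ a b : G, a ∈ Subgroup.normalizer (H₀ : Set G) → b ∈ Subgroup.normalizer (H₀ : Set G) →
      a * b * a⁻¹ * b⁻¹ ∈ H₀) :
    Subgroup.normalizer (H : Set G) = Subgroup.normalizer (H₀ : Set G) := by
  have hnorm : (H₀.subgroupOf H).Normal := Subgroup.normal_of_characteristic _
  -- H ≤ N(H₀)
  have hHN : H ≤ Subgroup.normalizer (H₀ : Set G) := by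
    intro h hh
    rw [Subgroup.mem_normalizer_iff]
    intro n
    constructor
    · intro hn
      have := hnorm.conj_mem ⟨n, hle hn⟩ (by simpa [Subgroup.mem_subgroupOf]) ⟨h, hh⟩
      simpa [Subgroup.mem_subgroupOf] using this
    · intro hn
      have := hnorm.conj_mem ⟨h * n * h⁻¹, by
          have : n ∈ H := by
            have := hle hn
            have : h⁻¹ * (h * n * h⁻¹) * h ∈ H := mul_mem (mul_mem (inv_mem hh) this) hh
            simpa [mul_assoc] using this
          exact mul_mem (mul_mem hh this) (inv_mem hh)⟩
        (by simpa [Subgroup.mem_subgroupOf]) ⟨h⁻¹, inv_mem hh⟩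
      simp only [Subgroup.mem_subgroupOf] at this
      have h2 : h⁻¹ * (h * n * h⁻¹) * h = n := by group
      simpa [h2] using this
  ext g
  constructor
  · -- g ∈ N(H) → g ∈ N(H₀) via characteristic
    intro hg
    rw [Subgroup.mem_normalizer_iff] at hg ⊢
    -- conjugation by g as automorphism of H
    let φ : H ≃* H :=
      { toFun := fun x => ⟨g * x * g⁻¹, (hg x).1 x.2⟩
        invFun := fun x => ⟨g⁻¹ * x * g, by
          have : g * (g⁻¹ * (x : G) * g) * g⁻¹ ∈ H := by
            have h2 : g * (g⁻¹ * (x : G) * g) * g⁻¹ = x := by group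
            rw [h2]; exact x.2
          exact (hg _).2 this⟩
        left_inv := fun x => by ext; simp; group
        right_inv := fun x => by ext; simp; group
        map_mul' := fun x y => by ext; simp [mul_assoc] }
    have hφ : ∀ x : H, ((φ x : G)) = g * x * g⁻¹ := fun _ => rfl
    have hfix := hchar.fixed φ
    intro n
    constructor
    · intro hn
      have hnH : n ∈ H := hle hn
      have : (⟨n, hnH⟩ : H) ∈ (H₀.subgroupOf H).comap φ.toMonoidHom := by
        rw [hfix]; simpa [Subgroup.mem_subgroupOf]
      simpa [Subgroup.mem_comap, Subgroup.mem_subgroupOf, hφ] using this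
    · intro hn
      have hnH : n ∈ H := by
        have hm : g * n * g⁻¹ ∈ H := hle hn
        exact (hg n).2 hm
      have : (⟨n, hnH⟩ : H) ∈ (H₀.subgroupOf H).comap φ.toMonoidHom := by
        simpa [Subgroup.mem_comap, Subgroup.mem_subgroupOf, hφ] using hn
      rw [hfix] at this
      simpa [Subgroup.mem_subgroupOf] using this
  · -- g ∈ N(H₀) → g ∈ N(H) via abelianness
    intro hg
    rw [Subgroup.mem_normalizer_iff]
    intro n
    constructor
    · intro hn
      have hc : g * n * g⁻¹ * n⁻¹ ∈ H₀ := hab g n hg (hHN hn)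
      have : g * n * g⁻¹ = (g * n * g⁻¹ * n⁻¹) * n := by group
      rw [this]
      exact mul_mem (hle hc) hn
    · intro hn
      set m := g * n * g⁻¹ with hm
      have hc : g⁻¹ * m * (g⁻¹)⁻¹ * m⁻¹ ∈ H₀ :=
        hab g⁻¹ m (inv_mem hg) (hHN hn)
      have h2 : n = (g⁻¹ * m * (g⁻¹)⁻¹ * m⁻¹) * m := by rw [hm]; group
      rw [h2]
      exact mul_mem (hle hc) hn
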